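/- arXiv:2206.04266 — 2 statements merged into one kernel-verified Lean document; each statement's English description precedes it below -/
import Mathlib

section
/- In the maze MDP, consider any optimal (shortest) trajectory from a corner c to the goal g. If the trajectory contains at least one 'feature-event' (a time t where some coordinate i satisfies x^t_i ∉ L^i but x^{t+1}_i ∈ L^i), then there exist a corner c' differing from c in exactly one coordinate and a trajectory c → c' → g of the same total cost, where the segment c → c' is a direct axis-aligned path. Hence shortest paths between corners can be rerouted through corners without increasing cost. -/
open scoped BigOperators

namespace Maze

/-- Points of the `d`-dimensional integer maze. -/
abbrev Pt (d : ℕ) := Fin d → ℤ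

/-- An open axis-aligned hyperrectangular obstacle determined by `a, b`. -/
def Obst {d : ℕ} (a b : Pt d) : Set (Pt d) := {x | ∀ i, a i < x i ∧ x i < b i}

/-- The union of the `k` obstacles. -/
def OSet {d k : ℕ} (a b : Fin k → Pt d) : Set (Pt d) := ⋃ j, Obst (a j) (b j)

/-- The list of `i`-th coordinates of obstacle boundaries together with the goal coordinate. -/
def Lists {d k : ℕ} (a b : Fin k → Pt d) (g : Pt d) (i : Fin d) : Finset ℤ :=
  (Finset.univ.image fun j => a j i) ∪ (Finset.univ.image fun j => b j i) ∪ {g i}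

/-- The surface (closed grid cell) of a point `x` with respect to coordinate lists `L`:
`y` lies in the surface iff in every coordinate `i`, `y i` equals `x i` when `x i` is a
grid value, and otherwise `y i` lies between the grid values surrounding `x i`. -/
def Surf {d : ℕ} (L : Fin d → Finset ℤ) (x : Pt d) : Set (Pt d) :=
  {y | ∀ i, (x i ∈ L i → y i = x i) ∧ (∀ l ∈ L i, l < x i → l ≤ y i) ∧
      (∀ l ∈ L i, x i < l → y i ≤ l)}

/-- Corners: points all of whose coordinates are grid values. -/
def Corners {d : ℕ} (L : Fin d → Finset ℤ) : Set (Pt d) := {c | ∀ i, c i ∈ L i}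

/-- Manhattan distance. -/
def manh {d : ℕ} (s t : Pt d) : ℕ := ∑ i, (s i - t i).natAbs

/-- A unit move in a single coordinate. -/
def Step {d : ℕ} (x y : Pt d) : Prop :=
  ∃ i, (y i = x i + 1 ∨ y i = x i - 1) ∧ ∀ j, j ≠ i → y j = x j

/-- A maze path of length `n` from `s` to `t` avoiding the obstacle set `O`. -/
def IsMazePath {d : ℕ} (O : Set (Pt d)) (f : ℕ → Pt d) (n : ℕ) (s t : Pt d) : Prop :=
  f 0 = s ∧ f n = t ∧ (∀ m, m < n → Step (f m) (f (m + 1))) ∧ (∀ m, m ≤ n → f m ∉ O)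

/-- Minimal number of steps of an obstacle-avoiding maze path from `s` to `t`
(`⊤` if there is none). -/
noncomputable def mazeDist {d : ℕ} (O : Set (Pt d)) (s t : Pt d) : ℕ∞ :=
  sInf {N : ℕ∞ | ∃ n : ℕ, N = n ∧ ∃ f, IsMazePath O f n s t}

/-- Two corners are adjacent if they agree in all coordinates except one, where their
values are consecutive elements of the corresponding list, and the axis-aligned segment
between them avoids the obstacles. -/
def Adjacent {d : ℕ} (L : Fin d → Finset ℤ) (O : Set (Pt d)) (c c' : Pt d) : Prop :=
  c ∈ Corners L ∧ c' ∈ Corners L ∧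
  ∃ i, c i ≠ c' i ∧ (∀ j, j ≠ i → c j = c' j) ∧
    (∀ l ∈ L i, ¬(min (c i) (c' i) < l ∧ l < max (c i) (c' i))) ∧
    (∀ z : Pt d, (∀ j, j ≠ i → z j = c j) →
      min (c i) (c' i) ≤ z i → z i ≤ max (c i) (c' i) → z ∉ O)

/-- Shortest-path distance from `s` to `t` in the weighted corner graph, with edges
between adjacent corners weighted by their Manhattan distance. -/
noncomputable def cornerDist {d : ℕ} (L : Fin d → Finset ℤ) (O : Set (Pt d))
    (s t : Pt d) : ℕ∞ :=
  sInf {N : ℕ∞ | ∃ (n : ℕ) (c : ℕ → Pt d), c 0 = s ∧ c n = t ∧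
    (∀ m, m < n → Adjacent L O (c m) (c (m + 1))) ∧
    N = ∑ m ∈ Finset.range n, (manh (c m) (c (m + 1)) : ℕ∞)}

section Helpers

variable {d : ℕ} {O : Set (Pt d)}

lemma step_natAbs {x y : Pt d} (h : Step x y) (j : Fin d) : (y j - x j).natAbs ≤ 1 := by
  obtain ⟨i, hi, ho⟩ := h
  by_cases hj : j = i
  · subst hj; rcases hi with h | h <;> rw [h] <;> simp
  · rw [ho j hj]; simp

lemma mazeDist_le {f : ℕ → Pt d} {n : ℕ} {s t : Pt d} (h : IsMazePath O f n s t) :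
    mazeDist O s t ≤ (n : ℕ∞) :=
  sInf_le ⟨n, rfl, f, h⟩

lemma mazeDist_min {s t : Pt d} {m : ℕ} (h : mazeDist O s t ≤ (m : ℕ∞)) :
    ∃ n, n ≤ m ∧ mazeDist O s t = (n : ℕ∞) ∧ ∃ f, IsMazePath O f n s t := by
  classical
  have hTne : {n : ℕ | ∃ f, IsMazePath O f n s t}.Nonempty := by
    by_contra hc
    have he : {N : ℕ∞ | ∃ n : ℕ, N = n ∧ ∃ f, IsMazePath O f n s t} = ∅ := by
      ext N
      simp only [Set.mem_setOf_eq, Set.mem_empty_iff_false, iff_false]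
      rintro ⟨n, rfl, f, hf⟩
      exact hc ⟨n, f, hf⟩
    rw [mazeDist, he, sInf_empty] at h
    simp at h
  obtain ⟨f0, hf0⟩ : ∃ f, IsMazePath O f (sInf {n : ℕ | ∃ f, IsMazePath O f n s t}) s t :=
    Nat.sInf_mem hTne
  have heq : mazeDist O s t = ((sInf {n : ℕ | ∃ f, IsMazePath O f n s t} : ℕ) : ℕ∞) := by
    unfold mazeDist
    apply le_antisymm
    · exact sInf_le ⟨_, rfl, f0, hf0⟩
    · refine le_sInf fun N hN => ?_
      obtain ⟨n, rfl, f, hf⟩ := hN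
      have : sInf {n : ℕ | ∃ f, IsMazePath O f n s t} ≤ n :=
        Nat.sInf_le (show n ∈ {n : ℕ | ∃ f, IsMazePath O f n s t} from ⟨f, hf⟩)
      exact_mod_cast this
  refine ⟨sInf {n : ℕ | ∃ f, IsMazePath O f n s t}, ?_, heq, f0, hf0⟩
  rw [heq] at h
  exact_mod_cast h

lemma path_concat {f p : ℕ → Pt d} {m q : ℕ} {s u t : Pt d}
    (hf : IsMazePath O f m s u) (hp : IsMazePath O p q u t) :
    ∃ h, IsMazePath O h (m + q) s t := by
  obtain ⟨hf0, hfm, hfs, hfo⟩ := hf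
  obtain ⟨hp0, hpq, hps, hpo⟩ := hp
  refine ⟨fun r => if r < m then f r else p (r - m), ?_, ?_, ?_, ?_⟩
  · by_cases h : 0 < m
    · simpa [h] using hf0
    · have hm0 : m = 0 := by omega
      subst hm0
      simp only [Nat.lt_irrefl, if_false, Nat.sub_zero]
      rw [hp0, ← hfm, hf0]
  · have : ¬ (m + q < m) := by omega
    simp only [this, if_false]
    simpa using hpq
  · intro r hr
    by_cases h1 : r + 1 < m
    · have h2 : r < m := by omega
      simpa [h1, h2] using hfs r h2
    · by_cases h2 : r < m
      · have h3 : r + 1 = m := by omega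
        have := hfs r h2
        simp only [h1, h2, if_true, if_false]
        rw [h3, Nat.sub_self, hp0, ← hfm, ← h3]
        exact this
      · have h4 : ¬ (r + 1 < m) := by omega
        have h5 : r + 1 - m = (r - m) + 1 := by omega
        simp only [h2, h4, if_false]
        rw [h5]
        exact hps (r - m) (by omega)
  · intro r hr
    by_cases h1 : r < m
    · simpa [h1] using hfo r (by omega)
    · simpa [h1] using hpo (r - m) (by omega)

def Relaxed (O : Set (Pt d)) (h : ℕ → Pt d) (n : ℕ) (s t : Pt d) : Prop :=
  h 0 = s ∧ h n = t ∧ (∀ m, m < n → Step (h m) (h (m + 1)) ∨ h (m + 1) = h m) ∧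
    ∀ m, m ≤ n → h m ∉ O

lemma relaxed_dist : ∀ (n : ℕ) (h : ℕ → Pt d) (s t : Pt d), Relaxed O h n s t →
    mazeDist O s t ≤
      ((n - ((Finset.range n).filter (fun m => h (m + 1) = h m)).card : ℕ) : ℕ∞) := by
  intro n
  induction n with
  | zero =>
    rintro h s t ⟨h0, hn, _, ho⟩
    exact mazeDist_le (f := h) (n := 0) ⟨h0, hn, by omega, ho⟩
  | succ n ih =>
    rintro h s t ⟨h0, hn, hs, ho⟩
    classical
    have hEn : ((Finset.range n).filter (fun m => h (m + 1) = h m)).card ≤ n :=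
      (Finset.card_filter_le _ _).trans (by simp)
    have hfilt : ((Finset.range (n + 1)).filter (fun m => h (m + 1) = h m)).card
        = ((Finset.range n).filter (fun m => h (m + 1) = h m)).card
          + (if h (n + 1) = h n then 1 else 0) := by
      rw [Finset.range_add_one, Finset.filter_insert]
      split
      · rw [Finset.card_insert_of_notMem (by simp)]
      · simp
    rcases hs n (by omega) with hstep | heq
    · have hrel : Relaxed O h n s (h n) :=
        ⟨h0, rfl, fun m hm => hs m (by omega), fun m hm => ho m (by omega)⟩
      obtain ⟨m0, hm0le, _, f0, hf0⟩ := mazeDist_min (ih h s (h n) hrel)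
      have hone : IsMazePath O (fun r => if r = 0 then h n else t) 1 (h n) t := by
        refine ⟨by simp, by simp, ?_, ?_⟩
        · intro m hm
          have : m = 0 := by omega
          subst this
          simpa [← hn] using hstep
        · intro m hm
          by_cases h1 : m = 0
          · simpa [h1] using ho n (by omega)
          · have : m = 1 := by omega
            subst this
            simpa [← hn] using ho (n + 1) (le_refl _)
      obtain ⟨hcat, hhcat⟩ := path_concat hf0 hone
      have hne : ¬ (h (n + 1) = h n) := by
        intro he
        obtain ⟨j, hj, _⟩ := hstep
        rw [he] at hj
        omega
      have hle : m0 + 1 ≤ (n + 1)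
          - ((Finset.range (n + 1)).filter (fun m => h (m + 1) = h m)).card := by
        rw [hfilt]
        simp only [hne, if_false]
        omega
      exact (mazeDist_le hhcat).trans (Nat.cast_le.mpr hle)
    · have hrel : Relaxed O h n s t :=
        ⟨h0, by rw [← hn, heq], fun m hm => hs m (by omega), fun m hm => ho m (by omega)⟩
      have hle : n - ((Finset.range n).filter (fun m => h (m + 1) = h m)).card ≤ (n + 1)
          - ((Finset.range (n + 1)).filter (fun m => h (m + 1) = h m)).card := by
        rw [hfilt]
        simp only [heq, if_true]
        omega
      exact (ih h s t hrel).trans (Nat.cast_le.mpr hle)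

lemma relaxed_dist' {h : ℕ → Pt d} {n : ℕ} {s t : Pt d} {E : ℕ} (hr : Relaxed O h n s t)
    (hE : E ≤ ((Finset.range n).filter (fun m => h (m + 1) = h m)).card) :
    mazeDist O s t ≤ ((n - E : ℕ) : ℕ∞) := by
  classical
  refine (relaxed_dist n h s t hr).trans ?_
  exact_mod_cast Nat.cast_le.mpr (Nat.sub_le_sub_left hE n)

lemma natAbs_le_card_ne (u : ℕ → ℤ) (t : ℕ)
    (hd : ∀ s, s < t → (u (s + 1) - u s).natAbs ≤ 1) :
    (u t - u 0).natAbs ≤ ((Finset.range t).filter (fun s => u (s + 1) ≠ u s)).card := by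
  classical
  have h1 : u t - u 0 = ∑ s ∈ Finset.range t, (u (s + 1) - u s) :=
    (Finset.sum_range_sub u t).symm
  have h2 : |u t - u 0| ≤ (((Finset.range t).filter (fun s => u (s + 1) ≠ u s)).card : ℤ) := by
    rw [h1]
    calc |∑ s ∈ Finset.range t, (u (s + 1) - u s)|
        ≤ ∑ s ∈ Finset.range t, |u (s + 1) - u s| := Finset.abs_sum_le_sum_abs _ _
      _ = ∑ s ∈ (Finset.range t).filter (fun s => u (s + 1) ≠ u s), |u (s + 1) - u s| := by
          rw [Finset.sum_filter_of_ne]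
          intro x _ hx
          exact fun he => hx (by rw [he]; simp)
      _ ≤ ∑ _s ∈ (Finset.range t).filter (fun s => u (s + 1) ≠ u s), (1 : ℤ) := by
          refine Finset.sum_le_sum fun s hs => ?_
          have := hd s (Finset.mem_range.mp (Finset.mem_filter.mp hs).1)
          rw [Int.abs_eq_natAbs]
          exact_mod_cast this
      _ = _ := by simp
  rw [Int.abs_eq_natAbs] at h2
  exact_mod_cast h2

end Helpers

/-- if a shortest maze trajectory from a corner `c` to the goal `g` contains a
feature-event, then there is a corner `c'` differing from `c` in exactly one coordinate,
reachable from `c` by an obstacle-free direct axis-aligned segment, such that going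
`c → c' → g` has the same optimal total cost. -/
theorem reroute_through_corner {d k : ℕ} (a b : Fin k → Pt d) (g : Pt d) (c : Pt d)
    (hc : c ∈ Corners (Lists a b g)) (n : ℕ) (f : ℕ → Pt d)
    (hpath : IsMazePath (OSet a b) f n c g)
    (hopt : (n : ℕ∞) = mazeDist (OSet a b) c g)
    (hevent : ∃ t, t < n ∧ ∃ i, f t i ∉ Lists a b g i ∧ f (t + 1) i ∈ Lists a b g i) :
    ∃ c' ∈ Corners (Lists a b g), ∃ i,
      c' i ≠ c i ∧ (∀ j, j ≠ i → c' j = c j) ∧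
      (∀ z : Pt d, (∀ j, j ≠ i → z j = c j) →
        min (c i) (c' i) ≤ z i → z i ≤ max (c i) (c' i) → z ∉ OSet a b) ∧
      (manh c c' : ℕ∞) + mazeDist (OSet a b) c' g = mazeDist (OSet a b) c g := by
  classical
  obtain ⟨hf0, hfn, hfs, hfo⟩ := hpath
  have hcmem : ∀ m, c m ∈ Lists a b g m := hc
  obtain ⟨t0, ht0, _⟩ := hevent
  have hn1 : 1 ≤ n := by omega
  obtain ⟨i, hi1, hiother⟩ := hfs 0 hn1
  simp only [Nat.zero_add] at hi1 hiother
  obtain ⟨ε, hεdef⟩ : ∃ e : ℤ, e = f 1 i - f 0 i := ⟨_, rfl⟩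
  have hε : ε = 1 ∨ ε = -1 := by
    rw [hεdef]; rcases hi1 with h | h <;> [left; right] <;> omega
  have hεne : ε ≠ 0 := by rcases hε with h | h <;> rw [h] <;> norm_num
  obtain ⟨u, huv⟩ : ∃ u : ℕ → ℤ, ∀ s, u s = ε * (f s i - c i) := ⟨_, fun _ => rfl⟩
  obtain ⟨G, hGdef⟩ : ∃ G : Finset ℤ,
      G = (Lists a b g i).image fun w => ε * (w - c i) := ⟨_, rfl⟩
  -- membership in Lists
  have ha_i : ∀ j, a j i ∈ Lists a b g i := by
    intro j
    simp only [Lists, Finset.mem_union, Finset.mem_image, Finset.mem_singleton]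
    exact Or.inl (Or.inl ⟨j, Finset.mem_univ j, rfl⟩)
  have hb_i : ∀ j, b j i ∈ Lists a b g i := by
    intro j
    simp only [Lists, Finset.mem_union, Finset.mem_image, Finset.mem_singleton]
    exact Or.inl (Or.inr ⟨j, Finset.mem_univ j, rfl⟩)
  have hg_i : g i ∈ Lists a b g i := by
    simp [Lists]
  have hGmem : ∀ x : ℤ, ε * (x - c i) ∈ G ↔ x ∈ Lists a b g i := by
    intro x
    rw [hGdef]
    constructor
    · intro h
      obtain ⟨w, hw, he⟩ := Finset.mem_image.mp h
      have hwx : w = x := by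
        have := mul_left_cancel₀ hεne he
        omega
      rwa [hwx] at hw
    · exact fun h => Finset.mem_image_of_mem _ h
  have hG0 : (0 : ℤ) ∈ G := by
    have := (hGmem (c i)).mpr (hcmem i)
    simpa using this
  have hu0 : u 0 = 0 := by rw [huv 0, hf0]; ring
  have hu1 : u 1 = 1 := by
    rw [huv 1]
    have h1 : f 1 i - c i = ε := by rw [hεdef, hf0]
    rw [h1]
    rcases hε with h | h <;> rw [h] <;> ring
  have hstepu : ∀ s, s < n → (u (s + 1) - u s).natAbs ≤ 1 := by
    intro s hs
    have h1 : u (s + 1) - u s = ε * (f (s + 1) i - f s i) := by rw [huv, huv]; ring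
    have h2 := step_natAbs (hfs s hs) i
    rw [h1, Int.natAbs_mul]
    have : ε.natAbs = 1 := by rcases hε with h | h <;> rw [h] <;> rfl
    rw [this, one_mul]
    exact h2
  -- first return time
  have hPex : ∃ t', 1 ≤ t' ∧ u t' ∈ G := by
    refine ⟨n, hn1, ?_⟩
    rw [huv n, hfn]
    exact (hGmem (g i)).mpr hg_i
  obtain ⟨t, hts, htle, htmin⟩ : ∃ t, (1 ≤ t ∧ u t ∈ G) ∧ t ≤ n ∧
      ∀ s, s < t → ¬(1 ≤ s ∧ u s ∈ G) := by
    refine ⟨Nat.find hPex, Nat.find_spec hPex, Nat.find_le ?_, fun s hs => Nat.find_min hPex hs⟩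
    exact ⟨hn1, by rw [huv n, hfn]; exact (hGmem (g i)).mpr hg_i⟩
  obtain ⟨ht1, htG⟩ := hts
  have hnotG : ∀ s, 1 ≤ s → s < t → u s ∉ G := fun s h1 h2 hG => htmin s h2 ⟨h1, hG⟩
  -- upper bound claim
  have hub : ∀ s, 1 ≤ s → s ≤ t → ∀ v, v ∈ G → 0 < v → u s ≤ v := by
    intro s
    induction s with
    | zero => omega
    | succ s ih =>
      intro _ hst v hv hv0
      by_cases hs0 : s = 0
      · subst hs0
        simp only [Nat.zero_add]
        omega
      · have h1 := ih (by omega) (by omega) v hv hv0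
        have h2 : u s ≠ v := fun he => hnotG s (by omega) (by omega) (he ▸ hv)
        have h3 := hstepu s (by omega)
        omega
  -- lower bound claim
  have hlb : ∀ s, 1 ≤ s → s ≤ t → 0 ≤ u s ∧ (s < t → 0 < u s) := by
    intro s
    induction s with
    | zero => omega
    | succ s ih =>
      intro _ hst
      by_cases hs0 : s = 0
      · subst hs0
        simp only [Nat.zero_add]
        omega
      · have h1 := ih (by omega) (by omega)
        have h2 := h1.2 (by omega)
        have h3 := hstepu s (by omega)
        constructor
        · omega
        · intro hlt
          have h4 : u (s + 1) ∉ G := hnotG (s + 1) (by omega) hlt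
          have h5 : u (s + 1) ≠ 0 := fun he => h4 (he ▸ hG0)
          omega
  -- obstacle transfer lemma
  have hkey : ∀ x y : Pt d, (∀ m, m ≠ i → x m = y m) →
      (∀ A B : ℤ, A ∈ G → B ∈ G → A < ε * (y i - c i) → ε * (y i - c i) < B →
        A < ε * (x i - c i) ∧ ε * (x i - c i) < B) →
      y ∈ OSet a b → x ∈ OSet a b := by
    intro x y hxy hint hy
    simp only [OSet, Set.mem_iUnion] at hy ⊢
    obtain ⟨j, hj⟩ := hy
    simp only [Obst, Set.mem_setOf_eq] at hj ⊢
    refine ⟨j, fun m => ?_⟩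
    by_cases hmi : m = i
    · subst hmi
      have hyi := hj m
      have hA : ε * (a j m - c m) ∈ G := by
        rw [hGdef]; exact Finset.mem_image_of_mem _ (ha_i j)
      have hB : ε * (b j m - c m) ∈ G := by
        rw [hGdef]; exact Finset.mem_image_of_mem _ (hb_i j)
      have hminG : min (ε * (a j m - c m)) (ε * (b j m - c m)) ∈ G := by
        rcases min_choice (ε * (a j m - c m)) (ε * (b j m - c m)) with h | h <;> rw [h]
        · exact hA
        · exact hB
      have hmaxG : max (ε * (a j m - c m)) (ε * (b j m - c m)) ∈ G := by
        rcases max_choice (ε * (a j m - c m)) (ε * (b j m - c m)) with h | h <;> rw [h]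
        · exact hA
        · exact hB
      have hyint : min (ε * (a j m - c m)) (ε * (b j m - c m)) < ε * (y m - c m) ∧
          ε * (y m - c m) < max (ε * (a j m - c m)) (ε * (b j m - c m)) := by
        rcases hε with h | h <;> rw [h] <;> constructor <;> omega
      obtain ⟨hxa, hxb⟩ := hint _ _ hminG hmaxG hyint.1 hyint.2
      rcases hε with h | h <;> rw [h] at hxa hxb <;> constructor <;> omega
    · have h1 := hj m
      rw [hxy m hmi]
      exact h1
  -- frozen walk: coordinate i frozen at f t i up to time t
  obtain ⟨hw, hwdef⟩ : ∃ hw : ℕ → Pt d,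
      hw = fun s => if s ≤ t then Function.update (f s) i (f t i) else f s := ⟨_, rfl⟩
  have hwle : ∀ s, s ≤ t → hw s = Function.update (f s) i (f t i) := by
    intro s hs; rw [hwdef]; simp [hs]
  have hwge : ∀ s, t ≤ s → hw s = f s := by
    intro s hs
    rw [hwdef]
    by_cases h : s ≤ t
    · have hst : s = t := by omega
      subst hst
      simp [Function.update_eq_self]
    · simp [h]
  have hw0 : hw 0 = Function.update c i (f t i) := by rw [hwle 0 (by omega), hf0]
  have hwn : hw n = g := by rw [hwge n htle, hfn]
  have hwsteps : ∀ m, m < n → Step (hw m) (hw (m + 1)) ∨ hw (m + 1) = hw m := by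
    intro m hm
    by_cases hm1 : m + 1 ≤ t
    · obtain ⟨j0, hj0, hj0o⟩ := hfs m hm
      rw [hwle m (by omega), hwle (m + 1) hm1]
      by_cases hj0i : j0 = i
      · subst hj0i
        right
        funext m'
        by_cases hm'i : m' = j0
        · subst hm'i; simp
        · rw [Function.update_of_ne hm'i, Function.update_of_ne hm'i]
          exact hj0o m' hm'i
      · left
        refine ⟨j0, ?_, ?_⟩
        · rw [Function.update_of_ne hj0i, Function.update_of_ne hj0i]
          exact hj0
        · intro j hj
          by_cases hji : j = i
          · subst hji; simp
          · rw [Function.update_of_ne hji, Function.update_of_ne hji]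
            exact hj0o j hj
    · rw [hwge m (by omega), hwge (m + 1) (by omega)]
      left; exact hfs m hm
  have hut0 : 0 ≤ u t := (hlb t ht1 le_rfl).1
  have hwavoid : ∀ s, 1 ≤ s → s ≤ t → hw s ∉ OSet a b := by
    intro s hs1 hst hO
    by_cases hstq : s = t
    · subst hstq
      rw [hwge s le_rfl] at hO
      exact hfo s (by omega) hO
    · refine hfo s (by omega) (hkey (f s) (hw s) ?_ ?_ hO)
      · intro m hm
        rw [hwle s hst, Function.update_of_ne hm]
      · intro A B hA hB h1 h2
        have hwsi : (hw s) i = f t i := by rw [hwle s hst]; simp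
        rw [hwsi, ← huv t] at h1 h2
        rw [← huv s]
        have hA0 : A ≤ 0 := by
          by_contra hcon
          push_neg at hcon
          have := hub t ht1 le_rfl A hA hcon
          omega
        have hpos := (hlb s hs1 (by omega)).2 (by omega)
        have hle := hub s hs1 (by omega) B hB (by omega)
        have hne : u s ≠ B := fun he => hnotG s hs1 (by omega) (he ▸ hB)
        omega
  have hwsub : (Finset.range t).filter (fun s => u (s + 1) ≠ u s) ⊆
      (Finset.range n).filter (fun m => hw (m + 1) = hw m) := by
    intro s hs
    rw [Finset.mem_filter, Finset.mem_range] at hs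
    obtain ⟨hst, hsne⟩ := hs
    rw [Finset.mem_filter, Finset.mem_range]
    refine ⟨by omega, ?_⟩
    obtain ⟨j0, hj0, hj0o⟩ := hfs s (by omega)
    have hj0i : j0 = i := by
      by_contra hcon
      apply hsne
      rw [huv (s + 1), huv s, hj0o i (fun he => hcon he.symm)]
    subst hj0i
    rw [hwle (s + 1) (by omega), hwle s (by omega)]
    funext m'
    by_cases hm'i : m' = j0
    · subst hm'i; simp
    · rw [Function.update_of_ne hm'i, Function.update_of_ne hm'i]
      exact hj0o m' hm'i
  by_cases hdet : u t = 0
  · -- detour case: contradiction with optimality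
    exfalso
    have hftc : f t i = c i := by
      have h := huv t
      rw [hdet] at h
      rcases hε with he | he <;> rw [he] at h <;> omega
    have hrel : Relaxed (OSet a b) hw n c g := by
      refine ⟨?_, hwn, hwsteps, ?_⟩
      · rw [hw0, hftc, Function.update_eq_self]
      · intro m hm
        by_cases hm0 : m = 0
        · subst hm0
          rw [hw0, hftc, Function.update_eq_self, ← hf0]
          exact hfo 0 (by omega)
        · by_cases hmt : m ≤ t
          · exact hwavoid m (by omega) hmt
          · rw [hwge m (by omega)]; exact hfo m hm
    have hcard : 1 ≤ ((Finset.range n).filter (fun m => hw (m + 1) = hw m)).card := by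
      have h0mem : 0 ∈ (Finset.range t).filter (fun s => u (s + 1) ≠ u s) := by
        rw [Finset.mem_filter, Finset.mem_range]
        refine ⟨by omega, ?_⟩
        simp only [Nat.zero_add]
        omega
      exact Finset.card_pos.mpr ⟨0, hwsub h0mem⟩
    have hd := relaxed_dist' hrel hcard
    rw [← hopt] at hd
    have := Nat.cast_le.mp hd
    omega
  · -- main case
    have hLpos : 0 < u t := lt_of_le_of_ne hut0 (Ne.symm hdet)
    obtain ⟨Lnat, hLcast⟩ : ∃ m : ℕ, (m : ℤ) = u t := ⟨(u t).toNat, Int.toNat_of_nonneg hut0⟩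
    have hfti : f t i = c i + ε * u t := by
      have h := huv t
      rcases hε with he | he <;> rw [he] at h ⊢ <;> omega
    obtain ⟨c', hc'def⟩ : ∃ c' : Pt d, c' = Function.update c i (f t i) := ⟨_, rfl⟩
    have hc'i : c' i = f t i := by rw [hc'def]; simp
    have hc'o : ∀ m, m ≠ i → c' m = c m := by
      intro m hm; rw [hc'def, Function.update_of_ne hm]
    have hc'ne : c' i ≠ c i := by
      rw [hc'i, hfti]
      rcases hε with he | he <;> rw [he] <;> omega
    have hftiL : f t i ∈ Lists a b g i := by
      have h := htG
      rw [huv t] at h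
      exact (hGmem _).mp h
    have hc'corner : c' ∈ Corners (Lists a b g) := by
      intro m
      by_cases hm : m = i
      · subst hm; rw [hc'i]; exact hftiL
      · rw [hc'o m hm]; exact hcmem m
    have hbound : ∀ z : Pt d, min (c i) (c' i) ≤ z i → z i ≤ max (c i) (c' i) →
        0 ≤ ε * (z i - c i) ∧ ε * (z i - c i) ≤ u t := by
      intro z h1 h2
      rw [hc'i, hfti] at h1 h2
      rcases hε with he | he <;> rw [he] at h1 h2 ⊢ <;> omega
    have hseg : ∀ z : Pt d, (∀ m, m ≠ i → z m = c m) →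
        min (c i) (c' i) ≤ z i → z i ≤ max (c i) (c' i) → z ∉ OSet a b := by
      intro z hz h1 h2 hO
      obtain ⟨hz0, hzL⟩ := hbound z h1 h2
      by_cases hz00 : ε * (z i - c i) = 0
      · have hzc : z = c := by
          funext m
          by_cases hm : m = i
          · subst hm
            rcases hε with he | he <;> rw [he] at hz00 <;> omega
          · exact hz m hm
        rw [hzc] at hO
        exact hfo 0 (by omega) (by rwa [hf0])
      · refine hfo 1 (by omega) (hkey (f 1) z ?_ ?_ hO)
        · intro m hm
          rw [hiother m hm, hf0, hz m hm]
        · intro A B hA hB h1' h2'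
          have hfi1 : ε * (f 1 i - c i) = 1 := by rw [← huv 1, hu1]
          rw [hfi1]
          constructor
          · rcases le_or_gt A 0 with h | h
            · omega
            · have := hub t ht1 le_rfl A hA h
              omega
          · omega
    have hrel2 : Relaxed (OSet a b) hw n c' g := by
      refine ⟨by rw [hw0, ← hc'def], hwn, hwsteps, ?_⟩
      intro m hm
      by_cases hm0 : m = 0
      · subst hm0
        rw [hw0, ← hc'def]
        exact hseg c' hc'o (min_le_right _ _) (le_max_right _ _)
      · by_cases hmt : m ≤ t
        · exact hwavoid m (by omega) hmt
        · rw [hwge m (by omega)]; exact hfo m hm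
    have hcount : Lnat ≤ ((Finset.range n).filter (fun m => hw (m + 1) = hw m)).card := by
      have h1 := natAbs_le_card_ne u t (fun s hs => hstepu s (by omega))
      rw [hu0] at h1
      have h2 : (u t - 0).natAbs = Lnat := by omega
      rw [h2] at h1
      exact h1.trans (Finset.card_le_card hwsub)
    have hLn : Lnat ≤ n := by
      have h1 := le_trans hcount (Finset.card_filter_le _ _)
      rw [Finset.card_range] at h1
      exact h1
    have hd2 := relaxed_dist' hrel2 hcount
    obtain ⟨m0, hm0le, hdist', p, hp⟩ := mazeDist_min hd2
    obtain ⟨sp, hspdef⟩ : ∃ sp : ℕ → Pt d,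
        sp = fun s : ℕ => Function.update c i (c i + ε * (s : ℤ)) := ⟨_, rfl⟩
    have hspv : ∀ s : ℕ, sp s = Function.update c i (c i + ε * (s : ℤ)) := fun s => by
      rw [hspdef]
    have hsppath : IsMazePath (OSet a b) sp Lnat c c' := by
      refine ⟨?_, ?_, ?_, ?_⟩
      · rw [hspv 0]; simp
      · rw [hspv Lnat, hc'def, hLcast, hfti]
      · intro m hm
        refine ⟨i, ?_, ?_⟩
        · rw [hspv (m + 1), hspv m]
          simp only [Function.update_self]
          rcases hε with he | he
          · left; rw [he]; push_cast; ring
          · right; rw [he]; push_cast; ring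
        · intro j hj
          rw [hspv (m + 1), hspv m, Function.update_of_ne hj, Function.update_of_ne hj]
      · intro m hm
        refine hseg (sp m) ?_ ?_ ?_
        · intro m' hm'; rw [hspv m, Function.update_of_ne hm']
        · rw [hspv m]
          simp only [Function.update_self]
          rw [hc'i, hfti]
          have hmz : (m : ℤ) ≤ u t := by
            rw [← hLcast]
            exact_mod_cast hm
          rcases hε with he | he <;> rw [he] <;> omega
        · rw [hspv m]
          simp only [Function.update_self]
          rw [hc'i, hfti]
          have hmz : (m : ℤ) ≤ u t := by
            rw [← hLcast]
            exact_mod_cast hm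
          rcases hε with he | he <;> rw [he] <;> omega
    obtain ⟨cat, hcat⟩ := path_concat hsppath hp
    have hcg := mazeDist_le hcat
    rw [← hopt] at hcg
    have hnle : n ≤ Lnat + m0 := Nat.cast_le.mp hcg
    have hneq : Lnat + m0 = n := by omega
    have hmanh : manh c c' = Lnat := by
      unfold manh
      rw [Fintype.sum_eq_single i (fun m hm => by rw [hc'o m hm]; simp)]
      rw [hc'i, hfti]
      rcases hε with he | he <;> rw [he] <;> omega
    refine ⟨c', hc'corner, i, hc'ne, hc'o, hseg, ?_⟩
    rw [hdist', ← hopt, hmanh, ← Nat.cast_add, hneq]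


end Maze
end

section
/- In the maze MDP on ℤ^d, if corners c¹ and c² are adjacent (they agree on all coordinates except one, where their values are consecutive elements of the corresponding list L^i, and no obstacle lies between them), then the shortest obstacle-avoiding path in the maze from c¹ to c² has length exactly |c¹_i − c²_i|. -/
open scoped BigOperators

namespace Maze

lemma manh_triangle {d : ℕ} (s x t : Pt d) : manh s t ≤ manh s x + manh x t := by
  unfold manh
  rw [← Finset.sum_add_distrib]
  apply Finset.sum_le_sum
  intro j _
  have h : s j - t j = (s j - x j) + (x j - t j) := by ring
  rw [h]
  exact Int.natAbs_add_le _ _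

lemma manh_step {d : ℕ} {x y : Pt d} (h : Step x y) : manh x y = 1 := by
  obtain ⟨i, hi, hj⟩ := h
  unfold manh
  rw [Finset.sum_eq_single i]
  · rcases hi with h | h <;> rw [h] <;> omega
  · intro j _ hji
    rw [hj j hji]; omega
  · intro h; exact absurd (Finset.mem_univ i) h

lemma manh_le_of_path {d : ℕ} (O : Set (Pt d)) (f : ℕ → Pt d) (n : ℕ) (s t : Pt d)
    (h : IsMazePath O f n s t) : manh s t ≤ n := by
  obtain ⟨h0, hn, hstep, -⟩ := h
  have key : ∀ m, m ≤ n → manh (f 0) (f m) ≤ m := by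
    intro m
    induction m with
    | zero => intro _; simp [manh]
    | succ m ih =>
      intro hm
      have h1 := ih (Nat.le_of_succ_le hm)
      have h2 := manh_step (hstep m (by omega))
      calc manh (f 0) (f (m+1)) ≤ manh (f 0) (f m) + manh (f m) (f (m+1)) :=
            manh_triangle _ _ _
        _ ≤ m + 1 := by omega
  rw [← h0, ← hn]
  exact key n le_rfl

/-- the shortest obstacle-avoiding maze path between two adjacent corners has
length exactly the absolute difference in the coordinate where they differ. -/
theorem mazeDist_adjacent_corners {d k : ℕ} (a b : Fin k → Pt d) (g : Pt d)
    (c c' : Pt d) (hc : c ∈ Corners (Lists a b g)) (hc' : c' ∈ Corners (Lists a b g))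
    (i : Fin d) (hne : c i ≠ c' i) (heq : ∀ j, j ≠ i → c j = c' j)
    (hconsec : ∀ l ∈ Lists a b g i, ¬(min (c i) (c' i) < l ∧ l < max (c i) (c' i)))
    (hfree : ∀ z : Pt d, (∀ j, j ≠ i → z j = c j) →
      min (c i) (c' i) ≤ z i → z i ≤ max (c i) (c' i) → z ∉ OSet a b) :
    mazeDist (OSet a b) c c' = ((c i - c' i).natAbs : ℕ∞) := by
  set N : ℕ := (c i - c' i).natAbs with hN
  set ε : ℤ := if c i < c' i then 1 else -1 with hε
  have hNε : c i + ε * N = c' i := by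
    rcases lt_or_gt_of_ne hne with h | h
    · simp only [hε, if_pos h, one_mul, hN]; omega
    · simp only [hε, if_neg (not_lt.mpr h.le), hN]; omega
  -- the straight-line path
  set f : ℕ → Pt d := fun m j => if j = i then c i + ε * (min m N : ℕ) else c j with hf
  have hmanh : manh c c' = N := by
    unfold manh
    rw [Finset.sum_eq_single i]
    · intro j _ hji; rw [heq j hji]; omega
    · intro h; exact absurd (Finset.mem_univ i) h
  have hpath : IsMazePath (OSet a b) f N c c' := by
    refine ⟨?_, ?_, ?_, ?_⟩
    · funext j
      by_cases hj : j = i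
      · subst hj; simp [hf]
      · simp [hf, hj]
    · funext j
      by_cases hj : j = i
      · subst hj; simp [hf, hNε]
      · simp [hf, hj, heq j hj]
    · intro m hm
      refine ⟨i, ?_, ?_⟩
      · have h1 : min (m+1) N = (m+1 : ℕ) := by omega
        have h2 : min m N = m := by omega
        simp only [hf, if_pos rfl, h1, h2]
        rcases lt_or_gt_of_ne hne with h | h
        · left; simp only [hε, if_pos h]; push_cast; ring
        · right; simp only [hε, if_neg (not_lt.mpr h.le)]; push_cast; ring
      · intro j hji; simp [hf, hji]
    · intro m hm
      apply hfree
      · intro j hji; simp [hf, hji]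
      · simp only [hf, if_pos rfl]
        have : min m N = m := by omega
        rw [this]
        rcases lt_or_gt_of_ne hne with h | h
        · simp only [hε, if_pos h]; rw [min_eq_left h.le]; omega
        · simp only [hε, if_neg (not_lt.mpr h.le)]; rw [min_eq_right h.le]
          have : (m : ℤ) ≤ N := by exact_mod_cast (by omega : m ≤ N)
          omega
      · simp only [hf, if_pos rfl]
        have hm' : min m N = m := by omega
        rw [hm']
        have hmN : (m : ℤ) ≤ N := by exact_mod_cast (by omega : m ≤ N)
        rcases lt_or_gt_of_ne hne with h | h
        · simp only [hε, if_pos h]; rw [max_eq_right h.le]; omega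
        · simp only [hε, if_neg (not_lt.mpr h.le)]; rw [max_eq_left h.le]; omega
  apply le_antisymm
  · exact sInf_le ⟨N, rfl, f, hpath⟩
  · apply le_sInf
    rintro x ⟨n, rfl, fp, hfp⟩
    have := manh_le_of_path _ _ _ _ _ hfp
    rw [hmanh] at this
    exact_mod_cast this

end Maze
end
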